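/- Let f1, f2 be homogeneous of degrees d1 ≤ d2 over a nonzero commutative ring A, forming a regular sequence, δ = d1+d2−2. For multi-indices α, β with 0 ≤ |α| = |β| ≤ d1−1, the product X^α · sylv_β(f1,f2) in B equals sylv_{(0,0)}(f1,f2) if α = β, and equals 0 in H^0_m(B)_δ if α ≠ β. -/
import Mathlib


open MvPolynomial

/-- If `X 0 * p = X 1 * q` in `A[X0,X1]`, then there is `c` with `p = X 1 * c`
and `q = X 0 * c`. -/
lemma key_cross {A : Type*} [CommRing A] (p q : MvPolynomial (Fin 2) A)
    (h : X 0 * p = X 1 * q) : ∃ c, p = X 1 * c ∧ q = X 0 * c := by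
  classical
  have hdvd : (X (1 : Fin 2) : MvPolynomial (Fin 2) A) ∣ p := by
    rw [X, monomial_one_dvd_iff_modMonomial_eq_zero]
    ext s'
    rw [coeff_zero]
    by_cases hle : Finsupp.single (1 : Fin 2) 1 ≤ s'
    · exact coeff_modMonomial_of_le p hle
    · rw [coeff_modMonomial_of_not_le p hle]
      have h1 : s' 1 = 0 := by
        by_contra h0
        exact hle (Finsupp.single_le_iff.mpr (Nat.one_le_iff_ne_zero.mpr h0))
      have hc := congrArg (coeff (Finsupp.single (0 : Fin 2) 1 + s')) h
      rw [coeff_X_mul, coeff_X_mul'] at hc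
      rw [hc, if_neg]
      simp only [Finsupp.mem_support_iff, Finsupp.add_apply, Finsupp.single_apply]
      simp [h1]
  obtain ⟨c, hc⟩ := hdvd
  refine ⟨c, hc, ?_⟩
  have h1 : X (1 : Fin 2) * (X 0 * c) = X 1 * q := by rw [← h, hc]; ring
  exact (isRegular_X.left h1).symm

/-- `isSylv d1 d2 β1 β2 f1 f2 s` : `s` is (a representative of) the Sylvester form
`sylv_{(β1,β2)}(f1,f2)`, i.e. the determinant of a decomposition
`f_i = X1^{β1+1} a_{i,1} + X2^{β2+1} a_{i,2}` with `a_{i,j}` homogeneous of degree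
`d_i − β_j − 1`. -/
def isSylv {A : Type*} [CommRing A] (d1 d2 β1 β2 : ℕ)
    (f1 f2 s : MvPolynomial (Fin 2) A) : Prop :=
  ∃ a11 a12 a21 a22 : MvPolynomial (Fin 2) A,
    a11.IsHomogeneous (d1 - β1 - 1) ∧ a12.IsHomogeneous (d1 - β2 - 1) ∧
    a21.IsHomogeneous (d2 - β1 - 1) ∧ a22.IsHomogeneous (d2 - β2 - 1) ∧
    f1 = X 0 ^ (β1 + 1) * a11 + X 1 ^ (β2 + 1) * a12 ∧
    f2 = X 0 ^ (β1 + 1) * a21 + X 1 ^ (β2 + 1) * a22 ∧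
    s = a11 * a22 - a12 * a21

/-- Let `f1, f2` be homogeneous of degrees `d1 ≤ d2` over a nonzero
commutative ring `A`, forming a regular sequence, `δ = d1+d2−2`.  For multi-indices
`α, β` with `0 ≤ |α| = |β| ≤ d1 − 1`, the product `X^α · sylv_β(f1,f2)` in `B` equals
`sylv_{(0,0)}(f1,f2)` if `α = β` and equals `0` in `H^0_m(B)_δ` otherwise; in terms of
representatives, `X1^{α1} X2^{α2} · sβ − s00 ∈ (f1,f2)` when `α = β`, and
`X1^{α1} X2^{α2} · sβ ∈ (f1,f2)` when `α ≠ β`. -/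
theorem stmt17 {A : Type*} [CommRing A] [Nontrivial A] (d1 d2 : ℕ)
    (hd1 : 1 ≤ d1) (hd12 : d1 ≤ d2)
    (f1 f2 : MvPolynomial (Fin 2) A)
    (hf1 : f1.IsHomogeneous d1) (hf2 : f2.IsHomogeneous d2)
    (hreg : RingTheory.Sequence.IsRegular (MvPolynomial (Fin 2) A) [f1, f2])
    (α1 α2 β1 β2 : ℕ) (hαβ : α1 + α2 = β1 + β2) (hβ : β1 + β2 + 1 ≤ d1)
    (sβ s00 : MvPolynomial (Fin 2) A)
    (hsβ : isSylv d1 d2 β1 β2 f1 f2 sβ)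
    (hs00 : isSylv d1 d2 0 0 f1 f2 s00) :
    ((α1, α2) = (β1, β2) →
      X 0 ^ α1 * X 1 ^ α2 * sβ - s00 ∈ Ideal.span {f1, f2}) ∧
    ((α1, α2) ≠ (β1, β2) →
      X 0 ^ α1 * X 1 ^ α2 * sβ ∈ Ideal.span {f1, f2}) := by
  obtain ⟨a11, a12, a21, a22, _, _, _, _, hf1β, hf2β, hsβe⟩ := hsβ
  obtain ⟨b11, b12, b21, b22, _, _, _, _, hf10, hf20, hs00e⟩ := hs00
  constructor
  · -- α = β case
    intro hEq
    obtain ⟨hα1, hα2⟩ : α1 = β1 ∧ α2 = β2 := Prod.mk.injEq .. ▸ hEq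
    subst hα1; subst hα2
    have heq1 : X (0 : Fin 2) * (X 0 ^ α1 * a11 - b11) = X 1 * (b12 - X 1 ^ α2 * a12) := by
      have h := hf1β.symm.trans hf10
      linear_combination h
    have heq2 : X (0 : Fin 2) * (X 0 ^ α1 * a21 - b21) = X 1 * (b22 - X 1 ^ α2 * a22) := by
      have h := hf2β.symm.trans hf20
      linear_combination h
    obtain ⟨c1, hc1p, hc1q⟩ := key_cross _ _ heq1
    obtain ⟨c2, hc2p, hc2q⟩ := key_cross _ _ heq2
    have hb11 : b11 = X 0 ^ α1 * a11 - X 1 * c1 := by linear_combination -hc1p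
    have hb12 : b12 = X 1 ^ α2 * a12 + X 0 * c1 := by linear_combination hc1q
    have hb21 : b21 = X 0 ^ α1 * a21 - X 1 * c2 := by linear_combination -hc2p
    have hb22 : b22 = X 1 ^ α2 * a22 + X 0 * c2 := by linear_combination hc2q
    refine Ideal.mem_span_pair.mpr ⟨-c2, c1, ?_⟩
    rw [hsβe, hs00e, hb11, hb12, hb21, hb22, hf1β, hf2β]
    ring
  · -- α ≠ β case
    intro hNe
    have hα1β1 : α1 ≠ β1 := by
      intro h; apply hNe; subst h
      have : α2 = β2 := by omega
      rw [this]
    rcases lt_or_gt_of_ne hα1β1 with hlt | hgt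
    · -- α1 < β1, so α2 ≥ β2 + 1 : use X1^{β2+1} sβ = a11 f2 − a21 f1
      have hge : β2 + 1 ≤ α2 := by omega
      obtain ⟨k, rfl⟩ := Nat.exists_eq_add_of_le hge
      refine Ideal.mem_span_pair.mpr ⟨-(X 0 ^ α1 * X 1 ^ k * a21), X 0 ^ α1 * X 1 ^ k * a11, ?_⟩
      rw [hsβe, hf1β, hf2β]
      ring
    · -- α1 > β1 : use X0^{β1+1} sβ = a22 f1 − a12 f2
      have hge : β1 + 1 ≤ α1 := hgt
      obtain ⟨k, rfl⟩ := Nat.exists_eq_add_of_le hge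
      refine Ideal.mem_span_pair.mpr ⟨X 0 ^ k * X 1 ^ α2 * a22, -(X 0 ^ k * X 1 ^ α2 * a12), ?_⟩
      rw [hsβe, hf1β, hf2β]
      ring
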